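/- (Kazhdan–Lusztig, existence) For each x ∈ W there exists a self-dual element C_x of the Hecke algebra (d(C_x) = C_x) with C_x ∈ H_x + Σ_{y < x} v Z[v] H_y, i.e. C_x - H_x is a linear combination of H_y for y strictly below x in Bruhat order, with coefficients in v Z[v]. -/

import Mathlib

/-!
Induction on the length of `x`, as in Kazhdan–Lusztig. If `s` is a left descent of `x`, then
`C_s C_{sx}` with `C_s = H_s + v` is self-dual and lies in `H_x + ∑_{y < x} ℤ[v] H_y`; the only
coefficients outside `v ℤ[v]` are the constant terms `μ` in front of the `H_y` with `sy < y`,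
and subtracting `μ C_y` removes them.

That every `y` occurring lies below `x` is the lifting property of the Bruhat order: if
`sw < w` and `y ≤ w` then `sy ≤ w`. It is proved together with its companion (`y ≤ u < su`,
`y < sy` give `sy ≤ su`) by induction along a Bruhat chain, using the strong exchange condition.
Strong exchange comes from the homomorphism `W → (W → ℤ/2) ⋊ W`, `s ↦ (δ_s, s)`: its first
component counts, mod 2, how often a reflection occurs in the left inversion sequence of any
word for `w`, so it detects the left inversions of `w` independently of the word.
-/

open LaurentPolynomial

/-- Membership in `v ℤ[v] ⊆ ℤ[v,v⁻¹]`. -/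
def IsVPol (p : LaurentPolynomial ℤ) : Prop :=
  ∃ q : Polynomial ℤ, p = Polynomial.toLaurent q * T 1

/-- The coefficient of `v` in a Laurent polynomial. -/
def muCoeff (p : LaurentPolynomial ℤ) : ℤ := p.coeff 1

variable {B W : Type*} [Group W] {M : CoxeterMatrix B}

/-- The Bruhat order `≤` on `W`: generated by right multiplication by reflections which
increases the length. -/
def BruhatLE (cs : CoxeterSystem M W) : W → W → Prop :=
  Relation.ReflTransGen
    (fun a b => (∃ t, cs.IsReflection t ∧ b = a * t) ∧ cs.length a < cs.length b)

/-- The strict Bruhat order on `W`. -/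
def BruhatLT (cs : CoxeterSystem M W) (x y : W) : Prop :=
  BruhatLE cs x y ∧ x ≠ y

/-- The Hecke algebra of a Coxeter system, axiomatized: a `ℤ[v,v⁻¹]`-algebra with a basis
`T_x` indexed by `W` satisfying the braid and quadratic relations. -/
structure HeckeAlg (cs : CoxeterSystem M W) (A : Type*) [Ring A]
    [Algebra (LaurentPolynomial ℤ) A] where
  Tb : Module.Basis W (LaurentPolynomial ℤ) A
  Tb_one : Tb 1 = 1
  Tb_mul : ∀ x y : W, cs.length (x * y) = cs.length x + cs.length y →
    Tb x * Tb y = Tb (x * y)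
  Tb_quadratic : ∀ i : B, (Tb (cs.simple i) + 1) *
    (Tb (cs.simple i) - algebraMap (LaurentPolynomial ℤ) A (T (-2))) = 0

namespace HeckeAlg

variable {cs : CoxeterSystem M W} {A : Type*} [Ring A] [Algebra (LaurentPolynomial ℤ) A]

/-- The standard basis element `H_x = v^{ℓ(x)} T_x`. -/
noncomputable def H (ha : HeckeAlg cs A) (x : W) : A :=
  algebraMap (LaurentPolynomial ℤ) A (T (cs.length x : ℤ)) * ha.Tb x

/-- The element `C_s = H_s + v` for a simple reflection `s`. -/
noncomputable def Cs (ha : HeckeAlg cs A) (i : B) : A :=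
  ha.H (cs.simple i) + algebraMap (LaurentPolynomial ℤ) A (T 1)

/-- Data of the bar involution `d` on the Hecke algebra: a ring endomorphism with
`d(v) = v⁻¹` and `d(H_x) = (H_{x⁻¹})⁻¹`. -/
structure Bar (ha : HeckeAlg cs A) where
  d : A →+* A
  d_scalar : ∀ n : ℤ, d (algebraMap (LaurentPolynomial ℤ) A (T n)) =
    algebraMap (LaurentPolynomial ℤ) A (T (-n))
  d_H_mul : ∀ x : W, d (ha.H x) * ha.H x⁻¹ = 1
  d_H_mul' : ∀ x : W, ha.H x⁻¹ * d (ha.H x) = 1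

/-- `c` is a Kazhdan–Lusztig basis element at `x`: bar-invariant and congruent to `H_x`
modulo `∑_y v ℤ[v] H_y`. -/
def IsKL (ha : HeckeAlg cs A) (bar : ha.Bar) (x : W) (c : A) : Prop :=
  bar.d c = c ∧ ∃ f : W →₀ LaurentPolynomial ℤ, (∀ y, IsVPol (f y)) ∧
    c = ha.H x + f.sum fun y r => r • ha.H y

end HeckeAlg

open scoped Classical
open HeckeAlg

lemma isVPol_zero : IsVPol 0 := ⟨0, by simp⟩

lemma IsVPol.add {p q : LaurentPolynomial ℤ} (hp : IsVPol p) (hq : IsVPol q) :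
    IsVPol (p + q) := by
  obtain ⟨a, rfl⟩ := hp
  obtain ⟨b, rfl⟩ := hq
  exact ⟨a + b, by rw [map_add, add_mul]⟩

lemma IsVPol.neg {p : LaurentPolynomial ℤ} (hp : IsVPol p) : IsVPol (-p) := by
  obtain ⟨a, rfl⟩ := hp
  exact ⟨-a, by rw [map_neg, neg_mul]⟩

lemma IsVPol.mul_T_one {p : LaurentPolynomial ℤ} (hp : IsVPol p) : IsVPol (p * T 1) := by
  obtain ⟨a, rfl⟩ := hp
  exact ⟨a * Polynomial.X, by rw [map_mul, Polynomial.toLaurent_X, mul_assoc]⟩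

lemma isVPol_T_one : IsVPol (T 1) := ⟨1, by simp⟩

lemma Polynomial.coeff_toLaurent_natCast {R : Type*} [Semiring R] (f : Polynomial R) (n : ℕ) :
    (Polynomial.toLaurent f).coeff n = f.coeff n :=
  Finsupp.mapDomain_apply Nat.castEmbedding.injective _ n

lemma IsVPol.mul_T_neg_one_sub_muCoeff {p : LaurentPolynomial ℤ} (hp : IsVPol p) :
    IsVPol (p * T (-1) - (muCoeff p : LaurentPolynomial ℤ)) := by
  obtain ⟨q, rfl⟩ := hp
  have hmu : muCoeff (Polynomial.toLaurent q * T 1) = q.coeff 0 := by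
    rw [muCoeff, ← Polynomial.toLaurent_X, ← map_mul, ← Nat.cast_one,
      Polynomial.coeff_toLaurent_natCast, Polynomial.coeff_mul_X]
  refine ⟨q.divX, ?_⟩
  rw [hmu, mul_T_assoc, add_neg_cancel, T_zero, mul_one, ← eq_intCast LaurentPolynomial.C,
    ← Polynomial.toLaurent_C, ← map_sub, ← Polynomial.toLaurent_X, ← map_mul]
  congr 1
  rw [sub_eq_iff_eq_add, Polynomial.divX_mul_X_add]

def conjIndexAut (G : Type*) [Mul G] : W →* MulAut (W → G) where
  toFun w :=
    { toFun := fun f u => f (w⁻¹ * u * w)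
      invFun := fun f u => f (w * u * w⁻¹)
      left_inv := fun f => by simp [mul_assoc]
      right_inv := fun f => by simp [mul_assoc]
      map_mul' := fun _ _ => rfl }
  map_one' := by ext; simp
  map_mul' _ _ := by ext; simp [mul_assoc]

@[simp]
lemma conjIndexAut_apply {G : Type*} [Mul G] (w : W) (f : W → G) (u : W) :
    conjIndexAut G w f u = f (w⁻¹ * u * w) := rfl

lemma conjIndexAut_mulSingle {G : Type*} [MulOneClass G] [DecidableEq W] (w r : W) (a : G) :
    conjIndexAut G w (Pi.mulSingle r a) = Pi.mulSingle (w * r * w⁻¹) a := by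
  ext u
  simp only [conjIndexAut_apply, Pi.mulSingle_apply]
  congr 1
  simp only [eq_iff_iff]
  constructor <;> rintro rfl <;> group

lemma mul_pow_mul_inv_of_mul_self {G : Type*} [Group G] {a b : G} (ha : a * a = 1)
    (hb : b * b = 1) (t : ℕ) : (a * b) ^ t * a * ((a * b) ^ t)⁻¹ = (a * b) ^ (2 * t) * a := by
  have hinv : a * (a * b) * a⁻¹ = (a * b)⁻¹ := by
    rw [mul_inv_rev, inv_eq_of_mul_eq_one_left ha, inv_eq_of_mul_eq_one_left hb, ← mul_assoc, ha,
      one_mul]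
  have hflip : a * ((a * b) ^ t)⁻¹ = (a * b) ^ t * a := by
    rw [← inv_pow, ← hinv, conj_pow, inv_eq_of_mul_eq_one_left ha]
    simp only [← mul_assoc, ha, one_mul]
  rw [mul_assoc, hflip, ← mul_assoc, ← pow_add, two_mul]

abbrev ReflParity (W : Type*) := W → Multiplicative (ZMod 2)

noncomputable def reflDelta (r : W) : ReflParity W := Pi.mulSingle r (Multiplicative.ofAdd 1)

lemma reflParity_mul_self {X : Type*} (f : ReflParity X) : f * f = 1 := by
  funext u
  exact (by decide : ∀ a : Multiplicative (ZMod 2), a * a = 1) (f u)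

/-- The left component of the `m`-th power is the product of the `reflDelta ((a * b) ^ k * a)`
over `k < 2 * m`, a sequence of period `m`, so every factor occurs twice. -/
lemma reflDelta_mul_pow_eq_one {a b : W} (ha : a * a = 1) (hb : b * b = 1) {m : ℕ}
    (hm : (a * b) ^ m = 1) :
    ((⟨reflDelta a, a⟩ : ReflParity W ⋊[conjIndexAut _] W) * ⟨reflDelta b, b⟩) ^ m = 1 := by
  let F : ℕ → ReflParity W := fun k => ∏ j ∈ Finset.range k, reflDelta ((a * b) ^ j * a)
  have hpow : ∀ t : ℕ, ((⟨reflDelta a, a⟩ : ReflParity W ⋊[conjIndexAut _] W) *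
      ⟨reflDelta b, b⟩) ^ t = ⟨F (2 * t), (a * b) ^ t⟩ := by
    intro t
    induction t with
    | zero => exact SemidirectProduct.ext (by simp [F]) (by simp)
    | succ t ih =>
      have hconj :
          (a * b) ^ t * (a * b * a⁻¹) * ((a * b) ^ t)⁻¹ = (a * b) ^ (2 * t + 1) * a := by
        calc (a * b) ^ t * (a * b * a⁻¹) * ((a * b) ^ t)⁻¹
            = a * b * ((a * b) ^ t * a * ((a * b) ^ t)⁻¹) := by
              rw [inv_eq_of_mul_eq_one_left ha, ← mul_assoc ((a * b) ^ t), ← pow_succ,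
                pow_succ']
              simp only [mul_assoc]
          _ = (a * b) ^ (2 * t + 1) * a := by
              rw [mul_pow_mul_inv_of_mul_self ha hb, pow_succ']
              simp only [mul_assoc]
      rw [pow_succ, ih]
      refine SemidirectProduct.ext ?_ (pow_succ _ _).symm
      simp only [reflDelta, SemidirectProduct.mul_left, map_mul, conjIndexAut_mulSingle, F,
        mul_pow_mul_inv_of_mul_self ha hb, hconj]
      rw [mul_add_one, Finset.prod_range_succ, Finset.prod_range_succ, mul_assoc]
  rw [hpow]
  refine SemidirectProduct.ext ?_ hm
  have hper : ∀ k, (a * b) ^ (m + k) = (a * b) ^ k := fun k => by rw [pow_add, hm, one_mul]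
  simp only [F, two_mul, Finset.prod_range_add, hper, reflParity_mul_self]
  rfl

namespace CoxeterSystem

variable (cs : CoxeterSystem M W)

local prefix:100 "s" => cs.simple
local prefix:100 "π" => cs.wordProd
local prefix:100 "ℓ" => cs.length
local prefix:100 "lis " => cs.leftInvSeq

noncomputable def reflLift : W →* ReflParity W ⋊[conjIndexAut _] W :=
  cs.lift ⟨fun i => ⟨reflDelta (s i), s i⟩, fun i j =>
    reflDelta_mul_pow_eq_one (cs.simple_mul_simple_self i) (cs.simple_mul_simple_self j)
      (cs.simple_mul_simple_pow i j)⟩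

lemma reflLift_simple (i : B) : cs.reflLift (s i) = ⟨reflDelta (s i), s i⟩ :=
  cs.lift_apply_simple _ i

lemma right_reflLift (w : W) : (cs.reflLift w).right = w := by
  suffices SemidirectProduct.rightHom.comp cs.reflLift = MonoidHom.id W from
    DFunLike.congr_fun this w
  exact cs.ext_simple fun i => by simp [reflLift_simple]

/-- `reflCocycle w t ≠ 1` exactly when `t` is a left inversion of `w`
(`reflCocycle_ne_one_of_isLeftInversion`, `isLeftInversion_of_reflCocycle_ne_one`). -/
noncomputable def reflCocycle (w : W) : ReflParity W := (cs.reflLift w).left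

lemma reflCocycle_mul (u v : W) :
    cs.reflCocycle (u * v) = cs.reflCocycle u * conjIndexAut _ u (cs.reflCocycle v) := by
  rw [reflCocycle, map_mul, SemidirectProduct.mul_left, right_reflLift]
  rfl

lemma reflCocycle_wordProd (ω : List B) :
    cs.reflCocycle (π ω) = ((lis ω).map reflDelta).prod := by
  induction ω with
  | nil => simp [reflCocycle]
  | cons i ω ih =>
    rw [wordProd_cons, reflCocycle_mul, ih, map_list_prod, List.map_map]
    simp [leftInvSeq, reflCocycle, reflLift_simple, reflDelta, conjIndexAut_mulSingle,
      Function.comp_def]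

lemma mem_leftInvSeq_of_reflCocycle_ne_one {ω : List B} {t : W}
    (h : cs.reflCocycle (π ω) t ≠ 1) : t ∈ lis ω := by
  contrapose! h
  rw [reflCocycle_wordProd, Pi.list_prod_apply, List.map_map]
  refine List.prod_eq_one fun a ha => ?_
  obtain ⟨r, hr, rfl⟩ := List.mem_map.mp ha
  exact Pi.mulSingle_eq_of_ne (ne_of_mem_of_not_mem hr h).symm _

lemma reflCocycle_one : cs.reflCocycle 1 = 1 := by
  rw [reflCocycle, map_one]
  rfl

lemma reflCocycle_conj_apply_self (v w : W) :
    cs.reflCocycle (v * w * v⁻¹) (v * w * v⁻¹) = cs.reflCocycle w w := by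
  have hv := congrFun (cs.reflCocycle_mul v v⁻¹) (v * w * v⁻¹)
  rw [mul_inv_cancel, reflCocycle_one] at hv
  have hc : cs.reflCocycle (v * w * v⁻¹) = cs.reflCocycle v *
      conjIndexAut _ v (cs.reflCocycle w * conjIndexAut _ w (cs.reflCocycle v⁻¹)) := by
    rw [mul_assoc, reflCocycle_mul, reflCocycle_mul]
  have e₁ : v⁻¹ * (v * w * v⁻¹) * v = w := by group
  have e₂ : w⁻¹ * w * w = w := by group
  rw [hc]
  simp only [Pi.mul_apply, conjIndexAut_apply, Pi.one_apply, e₁, e₂] at hv ⊢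
  rw [mul_left_comm, ← hv, mul_one]

lemma reflCocycle_apply_self_ne_one {t : W} (ht : cs.IsReflection t) :
    cs.reflCocycle t t ≠ 1 := by
  obtain ⟨v, i, rfl⟩ := ht
  rw [reflCocycle_conj_apply_self, reflCocycle, reflLift_simple]
  simp [reflDelta]

lemma isLeftInversion_of_reflCocycle_ne_one {w t : W} (h : cs.reflCocycle w t ≠ 1) :
    cs.IsLeftInversion w t := by
  obtain ⟨ω, hω, rfl⟩ := cs.exists_isReduced w
  exact cs.isLeftInversion_of_mem_leftInvSeq hω (cs.mem_leftInvSeq_of_reflCocycle_ne_one h)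

lemma reflCocycle_ne_one_of_isLeftInversion {w t : W} (h : cs.IsLeftInversion w t) :
    cs.reflCocycle w t ≠ 1 := by
  obtain ⟨ht, hlt⟩ := h
  have hw : cs.reflCocycle w t = cs.reflCocycle t t * cs.reflCocycle (t * w) t := by
    conv_lhs => rw [← one_mul w, ← ht.mul_self, mul_assoc, reflCocycle_mul]
    rw [Pi.mul_apply, conjIndexAut_apply, ht.inv, ht.mul_self, one_mul]
  have htw : cs.reflCocycle (t * w) t = 1 := by
    by_contra hne
    have := (cs.isLeftInversion_of_reflCocycle_ne_one hne).2
    rw [← mul_assoc, ht.mul_self, one_mul] at this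
    omega
  rw [hw, htw, mul_one]
  exact cs.reflCocycle_apply_self_ne_one ht

theorem exists_eraseIdx_of_isLeftInversion {ω : List B} {t : W}
    (h : cs.IsLeftInversion (π ω) t) : ∃ j < ω.length, t * π ω = π (ω.eraseIdx j) := by
  obtain ⟨j, hj, rfl⟩ := List.mem_iff_getElem.mp
    (cs.mem_leftInvSeq_of_reflCocycle_ne_one (cs.reflCocycle_ne_one_of_isLeftInversion h))
  rw [length_leftInvSeq] at hj
  refine ⟨j, hj, ?_⟩
  rw [← getD_leftInvSeq_mul_wordProd, List.getD_eq_getElem]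

end CoxeterSystem

section Bruhat

variable {cs : CoxeterSystem M W}

local prefix:100 "s" => cs.simple
local prefix:100 "π" => cs.wordProd
local prefix:100 "ℓ" => cs.length

lemma BruhatLE.trans {a b c : W} (h₁ : BruhatLE cs a b) (h₂ : BruhatLE cs b c) :
    BruhatLE cs a c :=
  Relation.ReflTransGen.trans h₁ h₂

lemma BruhatLE.length_le {u w : W} (h : BruhatLE cs u w) : ℓ u ≤ ℓ w := by
  induction h with
  | refl => rfl
  | tail _ hstep ih => exact ih.trans hstep.2.le

lemma bruhatLT_iff {u w : W} : BruhatLT cs u w ↔ BruhatLE cs u w ∧ ℓ u < ℓ w := by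
  refine ⟨fun ⟨h, hne⟩ => ⟨h, ?_⟩, fun ⟨h, hlt⟩ => ⟨h, by rintro rfl; exact hlt.false⟩⟩
  rcases Relation.ReflTransGen.cases_tail h with rfl | ⟨_, hu, hstep⟩
  · exact absurd rfl hne
  · exact (BruhatLE.length_le hu).trans_lt hstep.2

lemma BruhatLT.trans {a b c : W} (h₁ : BruhatLT cs a b) (h₂ : BruhatLT cs b c) :
    BruhatLT cs a c := by
  rw [bruhatLT_iff] at *
  exact ⟨h₁.1.trans h₂.1, h₁.2.trans h₂.2⟩

lemma bruhatLE_mul_of_length_lt {a t : W} (ht : cs.IsReflection t) (h : ℓ a < ℓ (a * t)) :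
    BruhatLE cs a (a * t) :=
  Relation.ReflTransGen.single ⟨⟨t, ht, rfl⟩, h⟩

lemma bruhatLE_mul_left_of_length_lt {a t : W} (ht : cs.IsReflection t) (h : ℓ a < ℓ (t * a)) :
    BruhatLE cs a (t * a) := by
  have e : t * a = a * (a⁻¹ * t * a⁻¹⁻¹) := by group
  rw [e] at h ⊢
  exact bruhatLE_mul_of_length_lt (ht.conj a⁻¹) h

lemma bruhatLE_simple_mul_of_not_isLeftDescent {w : W} {i : B} (h : ¬cs.IsLeftDescent w i) :
    BruhatLE cs w (s i * w) :=
  bruhatLE_mul_left_of_length_lt (cs.isReflection_simple i)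
    (by rw [cs.not_isLeftDescent_iff.mp h]; omega)

lemma simple_mul_bruhatLE_of_isLeftDescent {w : W} {i : B} (h : cs.IsLeftDescent w i) :
    BruhatLE cs (s i * w) w := by
  simpa using bruhatLE_simple_mul_of_not_isLeftDescent
    (cs.isLeftDescent_iff_not_isLeftDescent_mul.mp h)

lemma bruhatLE_wordProd_eraseIdx {ω : List B} (hω : cs.IsReduced ω) {j : ℕ}
    (hj : j < ω.length) : BruhatLE cs (π (ω.eraseIdx j)) (π ω) := by
  have hmem : (cs.leftInvSeq ω).getD j 1 ∈ cs.leftInvSeq ω := by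
    rw [List.getD_eq_getElem _ _ (by simpa using hj)]
    exact List.getElem_mem _
  obtain ⟨ht, hlt⟩ := cs.isLeftInversion_of_mem_leftInvSeq hω hmem
  have hcancel : (cs.leftInvSeq ω).getD j 1 * ((cs.leftInvSeq ω).getD j 1 * π ω) = π ω := by
    rw [← mul_assoc, ht.mul_self, one_mul]
  have h := bruhatLE_mul_left_of_length_lt ht (a := (cs.leftInvSeq ω).getD j 1 * π ω)
    (by rwa [hcancel])
  rwa [hcancel, cs.getD_leftInvSeq_mul_wordProd] at h

lemma simple_mul_mul_bruhatLE {w t : W} {i : B} (hw : cs.IsLeftDescent w i)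
    (ht : cs.IsReflection t) (hwt : ℓ (w * t) < ℓ w) : BruhatLE cs (s i * (w * t)) w := by
  -- By strong exchange, `w * t` is `w = π (i :: χ)` with one letter deleted.
  obtain ⟨χ, hχ, hsw⟩ := cs.exists_isReduced (s i * w)
  have hw' : w = π (i :: χ) := by rw [cs.wordProd_cons, ← hsw, cs.simple_mul_simple_cancel_left]
  have hconj : w * t * w⁻¹ * w = w * t := by group
  obtain ⟨j, hj, hwt'⟩ := cs.exists_eraseIdx_of_isLeftInversion (ω := i :: χ)
    ⟨ht.conj w, by rwa [← hw', hconj]⟩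
  rw [← hw', hconj] at hwt'
  rw [hwt']
  cases j with
  | zero =>
    rw [List.eraseIdx_cons_zero, ← hsw, cs.simple_mul_simple_cancel_left]
    exact Relation.ReflTransGen.refl
  | succ k =>
    rw [List.eraseIdx_cons_succ, cs.wordProd_cons, cs.simple_mul_simple_cancel_left]
    refine (bruhatLE_wordProd_eraseIdx hχ (by simpa using hj)).trans ?_
    rw [← hsw]
    exact simple_mul_bruhatLE_of_isLeftDescent hw

mutual

theorem BruhatLE.simple_mul_of_isLeftDescent {y w : W} {i : B} (hy : BruhatLE cs y w)
    (hw : cs.IsLeftDescent w i) : BruhatLE cs (s i * y) w := by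
  by_cases hyi : cs.IsLeftDescent y i
  · exact (simple_mul_bruhatLE_of_isLeftDescent hyi).trans hy
  rcases Relation.ReflTransGen.cases_tail hy with rfl | ⟨z, hyz, ⟨t, ht, hzw⟩, hzt⟩
  · exact absurd hw hyi
  have hz : BruhatLE cs z w := hzw ▸ bruhatLE_mul_of_length_lt ht (hzw ▸ hzt)
  by_cases hzi : cs.IsLeftDescent z i
  · exact (BruhatLE.simple_mul_of_isLeftDescent hyz hzi).trans hz
  · have hwt : w * t = z := by rw [hzw, mul_assoc, ht.mul_self, mul_one]
    have hszw : BruhatLE cs (s i * z) w := by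
      simpa [hwt] using simple_mul_mul_bruhatLE hw ht (by rwa [hwt])
    exact (BruhatLE.simple_mul_simple_mul hyz hzi hyi).trans hszw
termination_by cs.length w

theorem BruhatLE.simple_mul_simple_mul {y u : W} {i : B} (hy : BruhatLE cs y u)
    (hu : ¬cs.IsLeftDescent u i) (hyi : ¬cs.IsLeftDescent y i) :
    BruhatLE cs (s i * y) (s i * u) := by
  rcases Relation.ReflTransGen.cases_tail hy with rfl | ⟨z, hyz, ⟨t, ht, hzu⟩, hzt⟩
  · exact Relation.ReflTransGen.refl
  by_cases hzi : cs.IsLeftDescent z i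
  · exact (BruhatLE.simple_mul_of_isLeftDescent hyz hzi).trans <|
      (hzu ▸ bruhatLE_mul_of_length_lt ht (hzu ▸ hzt)).trans
        (bruhatLE_simple_mul_of_not_isLeftDescent hu)
  · have hsz : BruhatLE cs (s i * z) (s i * u) := by
      rw [hzu, ← mul_assoc]
      refine bruhatLE_mul_of_length_lt ht ?_
      rw [mul_assoc, ← hzu, cs.not_isLeftDescent_iff.mp hu, cs.not_isLeftDescent_iff.mp hzi]
      omega
    exact (BruhatLE.simple_mul_simple_mul hyz hzi hyi).trans hsz
termination_by cs.length u

end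

lemma simple_mul_bruhatLT_self {x : W} {i : B} (hx : cs.IsLeftDescent x i) :
    BruhatLT cs (s i * x) x :=
  bruhatLT_iff.mpr ⟨simple_mul_bruhatLE_of_isLeftDescent hx, hx⟩

lemma BruhatLT.simple_mul_of_isLeftDescent {x y : W} {i : B} (hy : BruhatLT cs y (s i * x))
    (hx : cs.IsLeftDescent x i) : BruhatLT cs (s i * y) x := by
  rw [bruhatLT_iff] at hy ⊢
  refine ⟨(hy.1.trans (simple_mul_bruhatLE_of_isLeftDescent hx)).simple_mul_of_isLeftDescent hx,
    ?_⟩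
  have := cs.length_simple_mul y i
  have := cs.isLeftDescent_iff.mp hx
  omega

end Bruhat

namespace HeckeAlg

variable {cs : CoxeterSystem M W} {A : Type*} [Ring A] [Algebra (LaurentPolynomial ℤ) A]
  (ha : HeckeAlg cs A)

local prefix:100 "s" => cs.simple
local prefix:100 "ℓ" => cs.length
local notation "φ" => algebraMap (LaurentPolynomial ℤ) A

lemma H_eq_smul (x : W) : ha.H x = (T (ℓ x) : LaurentPolynomial ℤ) • ha.Tb x :=
  (Algebra.smul_def _ _).symm

lemma H_one : ha.H 1 = 1 := by
  simp [H_eq_smul, ha.Tb_one]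

lemma H_mul_H {x y : W} (h : ℓ (x * y) = ℓ x + ℓ y) : ha.H x * ha.H y = ha.H (x * y) := by
  rw [H_eq_smul, H_eq_smul, H_eq_smul, smul_mul_smul, ← T_add, ha.Tb_mul x y h, h]
  push_cast
  rfl

lemma H_simple_mul_self (i : B) :
    ha.H (s i) * ha.H (s i) = (T (-1) - T 1 : LaurentPolynomial ℤ) • ha.H (s i) + 1 := by
  have hq : ha.Tb (s i) * ha.Tb (s i) = (T (-2) : LaurentPolynomial ℤ) • ha.Tb (s i) -
      ha.Tb (s i) + (T (-2) : LaurentPolynomial ℤ) • 1 := by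
    have h := ha.Tb_quadratic i
    simp only [Algebra.algebraMap_eq_smul_one, add_mul, mul_sub, mul_smul_comm, mul_one, smul_add,
      one_mul] at h
    rw [← sub_eq_zero, ← h]
    abel
  rw [H_eq_smul, cs.length_simple, smul_mul_smul, hq]
  simp only [smul_add, smul_sub, smul_smul, sub_mul, sub_smul, ← T_add]
  norm_num

lemma H_simple_mul_of_not_isLeftDescent {y : W} {i : B} (hy : ¬cs.IsLeftDescent y i) :
    ha.H (s i) * ha.H y = ha.H (s i * y) :=
  ha.H_mul_H (by rw [cs.length_simple, cs.not_isLeftDescent_iff.mp hy, add_comm])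

lemma H_simple_mul_of_isLeftDescent {y : W} {i : B} (hy : cs.IsLeftDescent y i) :
    ha.H (s i) * ha.H y = ha.H (s i * y) + (T (-1) - T 1 : LaurentPolynomial ℤ) • ha.H y := by
  have hy' : ha.H y = ha.H (s i) * ha.H (s i * y) := by
    rw [ha.H_simple_mul_of_not_isLeftDescent (cs.isLeftDescent_iff_not_isLeftDescent_mul.mp hy),
      cs.simple_mul_simple_cancel_left]
  rw [hy', ← mul_assoc, H_simple_mul_self, add_mul, one_mul, smul_mul_assoc, add_comm]

lemma Cs_mul_H_of_not_isLeftDescent {y : W} {i : B} (hy : ¬cs.IsLeftDescent y i) :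
    ha.Cs i * ha.H y = ha.H (s i * y) + (T 1 : LaurentPolynomial ℤ) • ha.H y := by
  rw [Cs, add_mul, ha.H_simple_mul_of_not_isLeftDescent hy, ← Algebra.smul_def]

lemma Cs_mul_H_of_isLeftDescent {y : W} {i : B} (hy : cs.IsLeftDescent y i) :
    ha.Cs i * ha.H y = ha.H (s i * y) + (T (-1) : LaurentPolynomial ℤ) • ha.H y := by
  rw [Cs, add_mul, ha.H_simple_mul_of_isLeftDescent hy, ← Algebra.smul_def, add_assoc, ← add_smul,
    sub_add_cancel]

variable {ha}

lemma Bar.d_H_simple (bar : ha.Bar) (i : B) :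
    bar.d (ha.H (s i)) = ha.H (s i) - φ (T (-1) - T 1) := by
  have hleft : bar.d (ha.H (s i)) * ha.H (s i) = 1 := by
    simpa using bar.d_H_mul (s i)
  have hright : ha.H (s i) * (ha.H (s i) - φ (T (-1) - T 1)) = 1 := by
    rw [mul_sub, H_simple_mul_self, ← Algebra.commutes, ← Algebra.smul_def, add_sub_cancel_left]
  calc bar.d (ha.H (s i))
      = bar.d (ha.H (s i)) * (ha.H (s i) * (ha.H (s i) - φ (T (-1) - T 1))) := by
        rw [hright, mul_one]
    _ = ha.H (s i) - φ (T (-1) - T 1) := by rw [← mul_assoc, hleft, one_mul]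

lemma Bar.d_Cs (bar : ha.Bar) (i : B) : bar.d (ha.Cs i) = ha.Cs i := by
  rw [Cs, map_add, bar.d_H_simple, bar.d_scalar, map_sub]
  abel

variable (ha) in
def vSpan (P : W → Prop) : AddSubgroup A where
  carrier := {c | ∃ f : W →₀ LaurentPolynomial ℤ, (∀ y, IsVPol (f y)) ∧ (∀ y ∈ f.support, P y) ∧
    c = f.sum fun y r => r • ha.H y}
  zero_mem' := ⟨0, fun _ => isVPol_zero, by simp, by simp⟩
  add_mem' := by
    rintro _ _ ⟨f, hf, hfP, rfl⟩ ⟨g, hg, hgP, rfl⟩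
    refine ⟨f + g, fun y => (hf y).add (hg y), fun y hy => ?_, ?_⟩
    · rcases Finset.mem_union.mp (Finsupp.support_add hy) with h | h
      exacts [hfP y h, hgP y h]
    · exact (Finsupp.sum_add_index' (h := fun y r => r • ha.H y) (fun _ => zero_smul _ _)
        fun _ _ _ => add_smul _ _ _).symm
  neg_mem' := by
    rintro _ ⟨f, hf, hfP, rfl⟩
    refine ⟨-f, fun y => (hf y).neg, fun y hy => hfP y (by simpa using hy), ?_⟩
    rw [Finsupp.sum_neg_index (h := fun y r => r • ha.H y) (fun _ => zero_smul _ _),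
      ← Finsupp.sum_neg]
    simp [neg_smul]

lemma smul_H_mem_vSpan {P : W → Prop} {r : LaurentPolynomial ℤ} {y : W} (hr : IsVPol r)
    (hy : P y) : r • ha.H y ∈ ha.vSpan P := by
  refine ⟨Finsupp.single y r, fun z => ?_, fun z hz => ?_, by simp⟩
  · rw [Finsupp.single_apply]
    split_ifs
    exacts [hr, isVPol_zero]
  · rwa [Finset.mem_singleton.mp (Finsupp.support_single_subset hz)]

lemma vSpan_mono {P Q : W → Prop} (h : ∀ y, P y → Q y) : ha.vSpan P ≤ ha.vSpan Q := by
  rintro _ ⟨f, hf, hfP, rfl⟩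
  exact ⟨f, hf, fun y hy => h y (hfP y hy), rfl⟩

lemma smul_Cs_mul_H_mem_vSpan {P : W → Prop} {p : LaurentPolynomial ℤ} {y : W} {i : B}
    (hyi : ¬cs.IsLeftDescent y i) (hp : IsVPol p) (hy : P y) (hsy : P (s i * y)) :
    p • (ha.Cs i * ha.H y) ∈ ha.vSpan P := by
  rw [ha.Cs_mul_H_of_not_isLeftDescent hyi, smul_add, smul_smul]
  exact add_mem (smul_H_mem_vSpan hp hsy) (smul_H_mem_vSpan hp.mul_T_one hy)

/-- The correction by `μ(p) • c` removes the constant term that `v⁻¹` creates in `p v⁻¹`. -/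
lemma smul_Cs_mul_H_sub_mem_vSpan {P : W → Prop} {p : LaurentPolynomial ℤ} {y : W} {i : B}
    {c : A} (hyi : cs.IsLeftDescent y i) (hp : IsVPol p) (hy : P y) (hsy : P (s i * y))
    (hc : c - ha.H y ∈ ha.vSpan P) :
    p • (ha.Cs i * ha.H y) - muCoeff p • c ∈ ha.vSpan P := by
  have e : p • (ha.Cs i * ha.H y) - muCoeff p • c = p • ha.H (s i * y) +
      (p * T (-1) - (muCoeff p : LaurentPolynomial ℤ)) • ha.H y - muCoeff p • (c - ha.H y) := by
    rw [ha.Cs_mul_H_of_isLeftDescent hyi, smul_add, smul_smul, sub_smul, Int.cast_smul_eq_zsmul,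
      smul_sub]
    abel
  rw [e]
  exact sub_mem
    (add_mem (smul_H_mem_vSpan hp hsy) (smul_H_mem_vSpan hp.mul_T_neg_one_sub_muCoeff hy))
    (zsmul_mem hc _)

theorem exists_selfDual_of_isLeftDescent (bar : ha.Bar) {x : W} {i : B}
    (hx : cs.IsLeftDescent x i)
    (ih : ∀ y, BruhatLT cs y x → ∃ c, bar.d c = c ∧ c - ha.H y ∈ ha.vSpan (BruhatLT cs · y)) :
    ∃ c, bar.d c = c ∧ c - ha.H x ∈ ha.vSpan (BruhatLT cs · x) := by
  have hx' : BruhatLT cs (s i * x) x := simple_mul_bruhatLT_self hx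
  obtain ⟨c', hc'd, f, hfv, hfx', hf⟩ := ih _ hx'
  have hC : ∀ y, BruhatLT cs y (s i * x) →
      ∃ c, bar.d c = c ∧ c - ha.H y ∈ ha.vSpan (BruhatLT cs · y) :=
    fun y hy => ih y (hy.trans hx')
  choose! C hCd hC using hC
  let m : W → ℤ := fun y => if cs.IsLeftDescent y i then muCoeff (f y) else 0
  refine ⟨ha.Cs i * c' - ∑ y ∈ f.support, m y • C y, ?_, ?_⟩
  · rw [map_sub, map_mul, bar.d_Cs, hc'd, map_sum]
    congr 1
    refine Finset.sum_congr rfl fun y hy => ?_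
    rw [map_zsmul, hCd y (hfx' y hy)]
  have e : ha.Cs i * c' - ∑ y ∈ f.support, m y • C y - ha.H x =
      (T 1 : LaurentPolynomial ℤ) • ha.H (s i * x) +
        ∑ y ∈ f.support, (f y • (ha.Cs i * ha.H y) - m y • C y) := by
    have hCs :
        ha.Cs i * ha.H (s i * x) = ha.H x + (T 1 : LaurentPolynomial ℤ) • ha.H (s i * x) := by
      rw [ha.Cs_mul_H_of_not_isLeftDescent (cs.isLeftDescent_iff_not_isLeftDescent_mul.mp hx),
        cs.simple_mul_simple_cancel_left]
    rw [← sub_add_cancel c' (ha.H (s i * x)), hf, mul_add, hCs, Finsupp.sum, Finset.mul_sum,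
      Finset.sum_sub_distrib]
    simp only [mul_smul_comm]
    abel
  rw [e]
  refine add_mem (smul_H_mem_vSpan isVPol_T_one hx') (sum_mem fun y hy => ?_)
  have hyx : BruhatLT cs y x := (hfx' y hy).trans hx'
  have hsyx : BruhatLT cs (s i * y) x := (hfx' y hy).simple_mul_of_isLeftDescent hx
  by_cases hyi : cs.IsLeftDescent y i
  · simp only [m, if_pos hyi]
    exact smul_Cs_mul_H_sub_mem_vSpan hyi (hfv y) hyx hsyx
      (vSpan_mono (fun z hz => hz.trans hyx) (hC y (hfx' y hy)))
  · simp only [m, if_neg hyi, zero_smul, sub_zero]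
    exact smul_Cs_mul_H_mem_vSpan hyi (hfv y) hyx hsyx

theorem exists_selfDual_sub_H_mem_vSpan (bar : ha.Bar) (x : W) :
    ∃ c, bar.d c = c ∧ c - ha.H x ∈ ha.vSpan (BruhatLT cs · x) := by
  by_cases h1 : x = 1
  · exact ⟨1, map_one _, by rw [h1, H_one, sub_self]; exact zero_mem _⟩
  obtain ⟨i, hx⟩ := cs.exists_leftDescent_of_ne_one h1
  exact exists_selfDual_of_isLeftDescent bar hx fun y hy =>
    have : cs.length y < cs.length x := (bruhatLT_iff.mp hy).2
    exists_selfDual_sub_H_mem_vSpan bar y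
termination_by cs.length x

end HeckeAlg

/-- Kazhdan–Lusztig, existence: for each `x` there is a self-dual element
`C_x ∈ H_x + ∑_{y < x} v ℤ[v] H_y`. -/
theorem stmt4 {B W : Type*} [Group W] {M : CoxeterMatrix B} (cs : CoxeterSystem M W)
    (A : Type*) [Ring A] [Algebra (LaurentPolynomial ℤ) A] (ha : HeckeAlg cs A)
    (bar : ha.Bar) (x : W) :
    ∃ c : A, bar.d c = c ∧
      ∃ f : W →₀ LaurentPolynomial ℤ, (∀ y, IsVPol (f y)) ∧
        (∀ y ∈ f.support, BruhatLT cs y x) ∧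
        c = ha.H x + f.sum fun y r => r • ha.H y := by
  obtain ⟨c, hc, f, hf, hfx, hcf⟩ := exists_selfDual_sub_H_mem_vSpan bar x
  exact ⟨c, hc, f, hf, hfx, eq_add_of_sub_eq' hcf⟩
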